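/- Let A, B, C be subspaces of E. If A ⊥g B and A ∩ B ⊆ C ⊊ A, then A ⊥g (B ⊔ C). -/

import Mathlib

/-- `Perp X Y`: every vector in the direction of `X` is orthogonal to every
vector in the direction of `Y`. -/
def Perp {E : Type*} [NormedAddCommGroup E] [InnerProductSpace ℝ E]
    (X Y : AffineSubspace ℝ E) : Prop :=
  ∀ u ∈ X.direction, ∀ v ∈ Y.direction, (inner ℝ u v : ℝ) = 0

/-- `PerpX X Y`: `X ⊥ Y` and `X ∩ Y ≠ ∅`. -/
def PerpX {E : Type*} [NormedAddCommGroup E] [InnerProductSpace ℝ E]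
    (X Y : AffineSubspace ℝ E) : Prop :=
  Perp X Y ∧ ((X : Set E) ∩ (Y : Set E)).Nonempty

/-- `PerpGo X₁ X₂`: the relation `⊥g∘`. -/
def PerpGo {E : Type*} [NormedAddCommGroup E] [InnerProductSpace ℝ E]
    (X₁ X₂ : AffineSubspace ℝ E) : Prop :=
  ∃ q : E, q ∈ X₁ ⊓ X₂ ∧ ∃ Z₁ Z₂ : AffineSubspace ℝ E,
    q ∈ Z₁ ∧ q ∈ Z₂ ∧ PerpX Z₁ (X₁ ⊓ X₂) ∧ PerpX Z₂ (X₁ ⊓ X₂) ∧ PerpX Z₁ Z₂ ∧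
    (X₁ ⊓ X₂) ⊔ Z₁ = X₁ ∧ (X₁ ⊓ X₂) ⊔ Z₂ = X₂

/-- `PerpG X₁ X₂`: the relation `⊥g`. -/
def PerpG {E : Type*} [NormedAddCommGroup E] [InnerProductSpace ℝ E]
    (X₁ X₂ : AffineSubspace ℝ E) : Prop :=
  PerpGo X₁ X₂ ∧ X₁ ⊓ X₂ ≠ X₁ ∧ X₁ ⊓ X₂ ≠ X₂

/-- Dimension of an affine subspace: the dimension of its direction. -/
noncomputable def adim {E : Type*} [NormedAddCommGroup E] [InnerProductSpace ℝ E]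
    (X : AffineSubspace ℝ E) : ℕ :=
  Module.finrank ℝ X.direction

variable {E : Type*} [NormedAddCommGroup E] [InnerProductSpace ℝ E] [FiniteDimensional ℝ E]

/-!
Write `U`, `W₁`, `W₂` for the directions of `A ⊓ B`, `Z₁`, `Z₂` and `V` for that of `C`, so that
`A` and `B` have directions `U ⊕ W₁` and `U ⊕ W₂` with `U`, `W₁`, `W₂` pairwise orthogonal.
By the modular law `V = U ⊕ (V ⊓ W₁)`, and since `W₂` is orthogonal to all of `A`, the direction
of `A ⊓ (B ⊔ C)` is `(U ⊕ W₁) ⊓ (V ⊕ W₂) = V`, i.e. `A ⊓ (B ⊔ C) = C`. The witnesses for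
`A ⊥g (B ⊔ C)` are then `Z₂` again and, on the side of `A`, the orthogonal complement of
`V ⊓ W₁` inside `W₁`.
-/

namespace Submodule

variable {𝕜 F : Type*} [RCLike 𝕜] [NormedAddCommGroup F] [InnerProductSpace 𝕜 F]

theorem inf_sup_eq_of_le_of_isOrtho {S V W : Submodule 𝕜 F} (hV : V ≤ S) (hW : W ⟂ S) :
    S ⊓ (V ⊔ W) = V := by
  rw [inf_comm, sup_inf_assoc_of_le W hV, hW.disjoint.eq_bot, sup_bot_eq]

theorem exists_le_isOrtho_sup_eq [FiniteDimensional 𝕜 F] {U V W : Submodule 𝕜 F}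
    (hUV : U ≤ V) (hVW : V ≤ U ⊔ W) (hWU : W ⟂ U) :
    ∃ W' ≤ W, W' ⟂ V ∧ V ⊔ W' = U ⊔ W := by
  have hV : V = U ⊔ W ⊓ V := by rw [← sup_inf_assoc_of_le W hUV, inf_eq_right.2 hVW]
  refine ⟨(W ⊓ V)ᗮ ⊓ W, inf_le_right, ?_, ?_⟩
  · have h : (W ⊓ V)ᗮ ⊓ W ⟂ U ⊔ W ⊓ V := isOrtho_sup_right.2
      ⟨hWU.mono_left inf_le_right, (isOrtho_orthogonal_left _).mono_left inf_le_left⟩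
    rwa [← hV] at h
  · calc V ⊔ (W ⊓ V)ᗮ ⊓ W = U ⊔ (W ⊓ V ⊔ (W ⊓ V)ᗮ ⊓ W) := by rw [← sup_assoc, ← hV]
      _ = U ⊔ W := by rw [sup_orthogonal_inf_of_hasOrthogonalProjection inf_le_left]

end Submodule

namespace AffineSubspace

theorem direction_sup_eq_of_direction_eq_sup {k V P : Type*} [Ring k] [AddCommGroup V]
    [Module k V] [AddTorsor V P] {B C : AffineSubspace k P} {U W : Submodule k V} {q : P}
    (hqB : q ∈ B) (hqC : q ∈ C) (hB : B.direction = U ⊔ W) (hU : U ≤ C.direction) :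
    (B ⊔ C).direction = C.direction ⊔ W := by
  rw [direction_sup_eq_sup_direction hqB hqC, hB, sup_right_comm, sup_eq_right.2 hU]

end AffineSubspace

section Perpendicular

variable {F : Type*} [NormedAddCommGroup F] [InnerProductSpace ℝ F]

theorem perp_iff_isOrtho {X Y : AffineSubspace ℝ F} : Perp X Y ↔ X.direction ⟂ Y.direction :=
  Submodule.isOrtho_iff_inner_eq.symm

theorem perpGo_iff_exists_direction {X₁ X₂ : AffineSubspace ℝ F} :
    PerpGo X₁ X₂ ↔ ∃ q ∈ X₁ ⊓ X₂, ∃ W₁ W₂ : Submodule ℝ F,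
      W₁ ⟂ (X₁ ⊓ X₂).direction ∧ W₂ ⟂ (X₁ ⊓ X₂).direction ∧ W₁ ⟂ W₂ ∧
      (X₁ ⊓ X₂).direction ⊔ W₁ = X₁.direction ∧ (X₁ ⊓ X₂).direction ⊔ W₂ = X₂.direction := by
  constructor
  · rintro ⟨q, hq, Z₁, Z₂, hqZ₁, hqZ₂, ⟨h₁, -⟩, ⟨h₂, -⟩, ⟨h₁₂, -⟩, hX₁, hX₂⟩
    refine ⟨q, hq, Z₁.direction, Z₂.direction, perp_iff_isOrtho.1 h₁, perp_iff_isOrtho.1 h₂,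
      perp_iff_isOrtho.1 h₁₂, ?_, ?_⟩
    · rw [← AffineSubspace.direction_sup_eq_sup_direction hq hqZ₁, hX₁]
    · rw [← AffineSubspace.direction_sup_eq_sup_direction hq hqZ₂, hX₂]
  · rintro ⟨q, hq, W₁, W₂, h₁, h₂, h₁₂, hX₁, hX₂⟩
    have hqZ (W : Submodule ℝ F) : q ∈ AffineSubspace.mk' q W := AffineSubspace.self_mem_mk' q W
    have hsup {X : AffineSubspace ℝ F} {W : Submodule ℝ F} (hqX : q ∈ X)
        (hX : (X₁ ⊓ X₂).direction ⊔ W = X.direction) : X₁ ⊓ X₂ ⊔ AffineSubspace.mk' q W = X := by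
      rwa [AffineSubspace.eq_iff_direction_eq_of_mem (le_sup_left (a := X₁ ⊓ X₂) hq) hqX,
        AffineSubspace.direction_sup_eq_sup_direction hq (hqZ W), AffineSubspace.direction_mk']
    refine ⟨q, hq, AffineSubspace.mk' q W₁, AffineSubspace.mk' q W₂, hqZ W₁, hqZ W₂,
      ⟨?_, q, hqZ W₁, hq⟩, ⟨?_, q, hqZ W₂, hq⟩, ⟨?_, q, hqZ W₁, hqZ W₂⟩,
      hsup hq.1 hX₁, hsup hq.2 hX₂⟩ <;>
    simpa only [perp_iff_isOrtho, AffineSubspace.direction_mk']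

variable {A B C : AffineSubspace ℝ F}

theorem inf_sup_eq_of_perpGo (h : PerpGo A B) (hC : A ⊓ B ≤ C) (hCA : C ≤ A) :
    A ⊓ (B ⊔ C) = C := by
  obtain ⟨q, hq, W₁, W₂, -, h₂, h₁₂, hA, hB⟩ := perpGo_iff_exists_direction.1 h
  have hqC : q ∈ C := hC hq
  have hqBC : q ∈ B ⊔ C := le_sup_right (a := B) hqC
  have hqABC : q ∈ A ⊓ (B ⊔ C) := ⟨hq.1, hqBC⟩
  rw [AffineSubspace.eq_iff_direction_eq_of_mem hqABC hqC,
    AffineSubspace.direction_inf_of_mem hq.1 hqBC,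
    AffineSubspace.direction_sup_eq_of_direction_eq_sup hq.2 hqC hB.symm
      (AffineSubspace.direction_le hC), ← hA]
  exact Submodule.inf_sup_eq_of_le_of_isOrtho (hA ▸ AffineSubspace.direction_le hCA)
    (Submodule.isOrtho_sup_right.2 ⟨h₂, h₁₂.symm⟩)

theorem perpGo_sup_of_perpGo [FiniteDimensional ℝ F] (h : PerpGo A B) (hC : A ⊓ B ≤ C)
    (hCA : C ≤ A) : PerpGo A (B ⊔ C) := by
  have hABC := inf_sup_eq_of_perpGo h hC hCA
  obtain ⟨q, hq, W₁, W₂, h₁, h₂, h₁₂, hA, hB⟩ := perpGo_iff_exists_direction.1 h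
  have hUV := AffineSubspace.direction_le hC
  have hVA : C.direction ≤ (A ⊓ B).direction ⊔ W₁ := hA ▸ AffineSubspace.direction_le hCA
  obtain ⟨W₁', hW₁', h₁', hA'⟩ := Submodule.exists_le_isOrtho_sup_eq hUV hVA h₁
  rw [perpGo_iff_exists_direction, hABC]
  refine ⟨q, hC hq, W₁', W₂, h₁', ?_, h₁₂.mono_left hW₁', hA'.trans hA, ?_⟩
  · exact (Submodule.isOrtho_sup_right.2 ⟨h₂, h₁₂.symm⟩).mono_right hVA
  · rw [AffineSubspace.direction_sup_eq_of_direction_eq_sup hq.2 (hC hq) hB.symm hUV]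

end Perpendicular

theorem stmt11_general (A B C : AffineSubspace ℝ E)
    (h₁ : PerpG A B) (h₂ : A ⊓ B ≤ C) (h₃ : C < A) :
    PerpG A (B ⊔ C) := by
  obtain ⟨hAB, -, hB⟩ := h₁
  have hABC := inf_sup_eq_of_perpGo hAB h₂ h₃.le
  refine ⟨perpGo_sup_of_perpGo hAB h₂ h₃.le, ?_, ?_⟩ <;> rw [hABC]
  · exact h₃.ne
  · intro hC
    exact hB (inf_eq_right.2 ((le_sup_left.trans hC.ge).trans h₃.le))

theorem stmt11 (A B C : AffineSubspace ℝ E)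
    (hA : (A : Set E).Nonempty) (hB : (B : Set E).Nonempty) (hC : (C : Set E).Nonempty)
    (h₁ : PerpG A B) (h₂ : A ⊓ B ≤ C) (h₃ : C < A) :
    PerpG A (B ⊔ C) :=
  stmt11_general A B C h₁ h₂ h₃
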